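/- arXiv:math/0403494 — 2 statements merged into one kernel-verified Lean document; each statement's English description precedes it below -/
import Mathlib

section
/- The one-point suspension Susp₁(v,K) is non-evasive if and only if K is non-evasive. -/
set_option linter.unusedSectionVars false


open Finset

variable {V : Type} [DecidableEq V]

/-- `K` (a finite set of finite sets) is an abstract simplicial complex:
it contains the empty face and is closed under taking subsets. -/
def IsComplex (K : Finset (Finset V)) : Prop :=
  ∅ ∈ K ∧ ∀ s ∈ K, ∀ t ⊆ s, t ∈ K

/-- The facets (maximal faces) of `K`. -/
def facetsOf (K : Finset (Finset V)) : Finset (Finset V) :=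
  K.filter fun s => ∀ t ∈ K, s ⊆ t → s = t

/-- The vertex set of `K`. -/
def vertsOf (K : Finset (Finset V)) : Finset V := K.sup id

/-- The link of the vertex `v` in `K`. -/
def linkOf (K : Finset (Finset V)) (v : V) : Finset (Finset V) :=
  (K.filter fun s => v ∈ s).image fun s => s.erase v

/-- The deletion of the vertex `v` from `K`. -/
def delOf (K : Finset (Finset V)) (v : V) : Finset (Finset V) :=
  K.filter fun s => v ∉ s

/-- The star of the vertex `v` in `K`. -/
def starOf (K : Finset (Finset V)) (v : V) : Finset (Finset V) :=
  K.filter fun s => v ∈ s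

/-- Join of two face sets. -/
def joinF (K L : Finset (Finset V)) : Finset (Finset V) :=
  (K ×ˢ L).image fun p => p.1 ∪ p.2

/-- Image of a complex under a vertex map. -/
def mapC {W : Type} [DecidableEq W] (f : V → W) (K : Finset (Finset V)) :
    Finset (Finset W) :=
  K.image (Finset.image f)

/-- The full edge `{v', v''}` on the two new vertices `v' = Sum.inr false`,
`v'' = Sum.inr true`, as a simplicial complex. -/
def edgeC (V : Type) [DecidableEq V] : Finset (Finset (V ⊕ Bool)) :=
  ({Sum.inr false, Sum.inr true} : Finset (V ⊕ Bool)).powerset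

/-- The boundary of the edge `{v', v''}`. -/
def bedgeC (V : Type) [DecidableEq V] : Finset (Finset (V ⊕ Bool)) :=
  (edgeC V).erase {Sum.inr false, Sum.inr true}

/-- The one-point suspension of `K` at the vertex `v`:
`((∂e ∗ K) ∖ (∂e ∗ star_K(v))) ∪ (e ∗ link_K(v))` where `e = {v',v''}`. -/
def susp (v : V) (K : Finset (Finset V)) : Finset (Finset (V ⊕ Bool)) :=
  (joinF (bedgeC V) (mapC Sum.inl K) \ joinF (bedgeC V) (mapC Sum.inl (starOf K v))) ∪
    joinF (edgeC V) (mapC Sum.inl (linkOf K v))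

/-- A simplicial complex is non-evasive if it is a single point, or there is a vertex
`w` such that both the link and the deletion of `w` are non-evasive. -/
inductive NonEvasive {W : Type} [DecidableEq W] : Finset (Finset W) → Prop
  | point (w : W) : NonEvasive {∅, {w}}
  | step (K : Finset (Finset W)) (w : W) (hw : {w} ∈ K)
      (hl : NonEvasive (linkOf K w)) (hd : NonEvasive (delOf K w)) : NonEvasive K

section Aux
variable {W : Type} [DecidableEq W]

-- basic membership lemmas
lemma mem_joinF {A B : Finset (Finset V)} {x : Finset V} :
    x ∈ joinF A B ↔ ∃ a ∈ A, ∃ b ∈ B, x = a ∪ b := by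
  simp only [joinF, mem_image, mem_product, Prod.exists]
  constructor
  · rintro ⟨a, b, ⟨ha, hb⟩, rfl⟩; exact ⟨a, ha, b, hb, rfl⟩
  · rintro ⟨a, ha, b, hb, rfl⟩; exact ⟨a, b, ⟨ha, hb⟩, rfl⟩

lemma mem_mapC {f : V → W} {K : Finset (Finset V)} {x : Finset W} :
    x ∈ mapC f K ↔ ∃ s ∈ K, x = s.image f := by
  simp [mapC, eq_comm]

lemma mem_linkOf {K : Finset (Finset V)} {v : V} {x : Finset V} :
    x ∈ linkOf K v ↔ ∃ s ∈ K, v ∈ s ∧ x = s.erase v := by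
  simp [linkOf, eq_comm, and_assoc]

lemma mem_delOf {K : Finset (Finset V)} {v : V} {x : Finset V} :
    x ∈ delOf K v ↔ x ∈ K ∧ v ∉ x := by simp [delOf]

lemma mem_bedgeC {δ : Finset (V ⊕ Bool)} :
    δ ∈ bedgeC V ↔ δ = ∅ ∨ δ = {Sum.inr false} ∨ δ = {Sum.inr true} := by
  simp only [bedgeC, edgeC, mem_erase, mem_powerset]
  constructor
  · rintro ⟨hne, hsub⟩
    by_cases h1 : (Sum.inr false : V ⊕ Bool) ∈ δ
    · by_cases h2 : (Sum.inr true : V ⊕ Bool) ∈ δ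
      · exact absurd (Subset.antisymm hsub (by simp [insert_subset_iff, h1, h2])) hne
      · right; left
        refine Subset.antisymm (fun x hx => ?_) (by simp [h1])
        rcases mem_insert.1 (hsub hx) with h | h
        · simp [h]
        · exact absurd (mem_singleton.1 h ▸ hx) h2
    · by_cases h2 : (Sum.inr true : V ⊕ Bool) ∈ δ
      · right; right
        refine Subset.antisymm (fun x hx => ?_) (by simp [h2])
        rcases mem_insert.1 (hsub hx) with h | h
        · exact absurd (h ▸ hx) h1
        · simp [h]
      · left
        refine eq_empty_of_forall_notMem fun x hx => ?_
        rcases mem_insert.1 (hsub hx) with h | h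
        · exact h1 (h ▸ hx)
        · exact h2 (mem_singleton.1 h ▸ hx)
  · rintro (rfl | rfl | rfl) <;>
      refine ⟨fun h => ?_, by simp⟩
    · have hm : (Sum.inr false : V ⊕ Bool) ∈ ({Sum.inr false, Sum.inr true} : Finset (V ⊕ Bool)) := by simp
      rw [← h] at hm; exact notMem_empty _ hm
    · have hm : (Sum.inr true : V ⊕ Bool) ∈ ({Sum.inr false, Sum.inr true} : Finset (V ⊕ Bool)) := by simp
      rw [← h] at hm; simp at hm
    · have hm : (Sum.inr false : V ⊕ Bool) ∈ ({Sum.inr false, Sum.inr true} : Finset (V ⊕ Bool)) := by simp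
      rw [← h] at hm; simp at hm

lemma mem_edgeC {δ : Finset (V ⊕ Bool)} :
    δ ∈ edgeC V ↔ δ ⊆ {Sum.inr false, Sum.inr true} := mem_powerset

-- complexes
lemma isComplex_delOf {K : Finset (Finset V)} (h : IsComplex K) (v : V) :
    IsComplex (delOf K v) := by
  refine ⟨mem_delOf.2 ⟨h.1, notMem_empty _⟩, fun s hs t ht => ?_⟩
  rcases mem_delOf.1 hs with ⟨hsK, hvs⟩
  exact mem_delOf.2 ⟨h.2 s hsK t ht, fun hvt => hvs (ht hvt)⟩

lemma isComplex_linkOf {K : Finset (Finset V)} (h : IsComplex K) {v : V} (hv : {v} ∈ K) :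
    IsComplex (linkOf K v) := by
  refine ⟨mem_linkOf.2 ⟨{v}, hv, by simp⟩, fun s hs t ht => ?_⟩
  rcases mem_linkOf.1 hs with ⟨u, huK, hvu, rfl⟩
  refine mem_linkOf.2 ⟨insert v t, h.2 u huK _ ?_, mem_insert_self _ _, ?_⟩
  · exact insert_subset (by exact hvu) (ht.trans (erase_subset _ _))
  · rw [erase_insert]; intro hvt; exact (mem_erase.1 (ht hvt)).1 rfl

lemma linkOf_subset_delOf {K : Finset (Finset V)} (h : IsComplex K) (v : V) :
    linkOf K v ⊆ delOf K v := by
  intro x hx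
  rcases mem_linkOf.1 hx with ⟨s, hsK, hvs, rfl⟩
  exact mem_delOf.2 ⟨h.2 s hsK _ (erase_subset _ _), notMem_erase _ _⟩

lemma linkOf_subset {K : Finset (Finset V)} (h : IsComplex K) (v : V) :
    linkOf K v ⊆ K := (linkOf_subset_delOf h v).trans (filter_subset _ _)

-- mapC lemmas
lemma linkOf_mapC {f : V → W} (hf : Function.Injective f) (K : Finset (Finset V)) (w : V) :
    linkOf (mapC f K) (f w) = mapC f (linkOf K w) := by
  ext x
  simp only [mem_linkOf, mem_mapC]
  constructor
  · rintro ⟨s, ⟨t, htK, rfl⟩, hws, rfl⟩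
    exact ⟨t.erase w, ⟨t, htK, mem_image.1 hws |>.elim fun u hu => (hf hu.2 ▸ hu.1 : w ∈ t), rfl⟩,
      (image_erase hf t w).symm⟩
  · rintro ⟨s, ⟨t, htK, hwt, rfl⟩, rfl⟩
    exact ⟨t.image f, ⟨t, htK, rfl⟩, mem_image_of_mem f hwt, (image_erase hf t w)⟩

lemma delOf_mapC {f : V → W} (hf : Function.Injective f) (K : Finset (Finset V)) (w : V) :
    delOf (mapC f K) (f w) = mapC f (delOf K w) := by
  ext x
  simp only [mem_delOf, mem_mapC]
  constructor
  · rintro ⟨⟨t, htK, rfl⟩, hws⟩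
    exact ⟨t, ⟨htK, fun h => hws (mem_image_of_mem f h)⟩, rfl⟩
  · rintro ⟨t, ⟨htK, hwt⟩, rfl⟩
    refine ⟨⟨t, htK, rfl⟩, fun h => ?_⟩
    rcases mem_image.1 h with ⟨u, hu, hu2⟩
    exact hwt (hf hu2 ▸ hu)

lemma nonEvasive_mapC {f : V → W} (hf : Function.Injective f) {K : Finset (Finset V)}
    (h : NonEvasive K) : NonEvasive (mapC f K) := by
  induction h with
  | point w =>
    have : mapC f {∅, {w}} = {∅, {f w}} := by
      ext x
      simp only [mem_mapC, mem_insert, mem_singleton]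
      constructor
      · rintro ⟨s, (rfl | rfl), rfl⟩ <;> simp
      · rintro (rfl | rfl)
        exacts [⟨∅, Or.inl rfl, by simp⟩, ⟨{w}, Or.inr rfl, by simp⟩]
    rw [this]; exact .point (f w)
  | step K w hw hl hd ihl ihd =>
    refine .step _ (f w) (mem_mapC.2 ⟨{w}, hw, by simp⟩) ?_ ?_
    · rw [linkOf_mapC hf]; exact ihl
    · rw [delOf_mapC hf]; exact ihd

lemma nonEvasive_of_mapC {f : V → W} (hf : Function.Injective f) {K : Finset (Finset V)}
    (h : NonEvasive (mapC f K)) : NonEvasive K := by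
  generalize hL : mapC f K = L at h
  induction h generalizing K with
  | point w =>
    have hemp : (∅ : Finset V) ∈ K := by
      have : (∅ : Finset W) ∈ mapC f K := by rw [hL]; simp
      rcases mem_mapC.1 this with ⟨s, hsK, hs⟩
      rwa [image_eq_empty.1 hs.symm] at hsK
    have hW : ({w} : Finset W) ∈ mapC f K := by rw [hL]; simp
    rcases mem_mapC.1 hW with ⟨s, hsK, hs⟩
    have hsne : s.Nonempty := by
      rcases s.eq_empty_or_nonempty with rfl | h; · simp at hs
      · exact h
    obtain ⟨u, hu⟩ := hsne
    have hfu : f u = w := by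
      have : f u ∈ ({w} : Finset W) := hs ▸ mem_image_of_mem f hu
      simpa using this
    have hsu : s = {u} := by
      refine Subset.antisymm (fun x hx => ?_) (by simpa using hu)
      have : f x ∈ ({w} : Finset W) := hs ▸ mem_image_of_mem f hx
      simp only [mem_singleton] at this ⊢
      exact hf (this.trans hfu.symm)
    have : K = {∅, {u}} := by
      refine Subset.antisymm (fun t htK => ?_) ?_
      · have : t.image f ∈ ({∅, {w}} : Finset (Finset W)) := hL ▸ mem_mapC.2 ⟨t, htK, rfl⟩
        rcases mem_insert.1 this with h1 | h1
        · simp only [image_eq_empty] at h1; simp [h1]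
        · have h1 : t.image f = {w} := mem_singleton.1 h1
          have : t = {u} := by
            refine Subset.antisymm (fun x hx => ?_) ?_
            · have : f x ∈ ({w} : Finset W) := h1 ▸ mem_image_of_mem f hx
              simp only [mem_singleton] at this ⊢
              exact hf (this.trans hfu.symm)
            · intro x hx
              have hx : x = u := mem_singleton.1 hx
              subst hx
              rcases t.eq_empty_or_nonempty with rfl | ⟨y, hy⟩
              · rw [image_empty] at h1; exact absurd h1.symm (singleton_ne_empty _)
              have : f y ∈ ({w} : Finset W) := h1 ▸ mem_image_of_mem f hy
              simp only [mem_singleton] at this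
              exact hf (this.trans hfu.symm) ▸ hy
          simp [this]
      · intro t ht
        rcases mem_insert.1 ht with rfl | h1
        · exact hemp
        · exact mem_singleton.1 h1 ▸ (hsu ▸ hsK)
    rw [this]; exact .point u
  | step L w hw hl hd ihl ihd =>
    subst hL
    rcases mem_mapC.1 hw with ⟨s, hsK, hs⟩
    obtain ⟨u, hu⟩ : s.Nonempty := by
      rcases s.eq_empty_or_nonempty with rfl | h; · simp at hs
      · exact h
    have hfu : f u = w := by
      have : f u ∈ ({w} : Finset W) := hs ▸ mem_image_of_mem f hu
      simpa using this
    have hsu : s = {u} := by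
      refine Subset.antisymm (fun x hx => ?_) (by simpa using hu)
      have : f x ∈ ({w} : Finset W) := hs ▸ mem_image_of_mem f hx
      simp only [mem_singleton] at this ⊢
      exact hf (this.trans hfu.symm)
    subst hsu
    refine .step K u hsK (ihl (by rw [← hfu, linkOf_mapC hf])) (ihd (by rw [← hfu, delOf_mapC hf]))

lemma cone_nonEvasive (n : ℕ) : ∀ (K : Finset (Finset W)) (c : W), K.card ≤ n →
    IsComplex K → (∀ s ∈ K, insert c s ∈ K) → NonEvasive K := by
  induction n with
  | zero =>
    intro K c hcard hK _
    have : K = ∅ := card_eq_zero.1 (Nat.le_zero.1 hcard)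
    exact absurd (this ▸ hK.1) (notMem_empty _)
  | succ n ih =>
    intro K c hcard hK hcone
    by_cases hex : ∃ u, u ≠ c ∧ {u} ∈ K
    · obtain ⟨u, huc, hu⟩ := hex
      have hss : delOf K u ⊂ K :=
        (ssubset_iff_of_subset (filter_subset _ _)).2
          ⟨{u}, hu, by simp [delOf, mem_filter]⟩
      have hdcard : (delOf K u).card ≤ n :=
        Nat.lt_succ_iff.1 (lt_of_lt_of_le (card_lt_card hss) hcard)
      have hlcard : (linkOf K u).card ≤ n :=
        le_trans (card_le_card (linkOf_subset_delOf hK u)) hdcard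
      refine .step K u hu ?_ ?_
      · refine ih (linkOf K u) c hlcard (isComplex_linkOf hK hu) ?_
        intro s hs
        rcases mem_linkOf.1 hs with ⟨t, htK, hut, rfl⟩
        refine mem_linkOf.2 ⟨insert c t, hcone t htK, mem_insert_of_mem hut, ?_⟩
        exact (erase_insert_of_ne (fun h => huc h.symm)).symm ▸ rfl
      · refine ih (delOf K u) c hdcard (isComplex_delOf hK u) ?_
        intro s hs
        rcases mem_delOf.1 hs with ⟨hsK, hus⟩
        exact mem_delOf.2 ⟨hcone s hsK, by simp [huc, hus, Ne.symm huc]⟩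
    · push_neg at hex
      have hc : ({c} : Finset W) ∈ K := by
        have := hcone ∅ hK.1; simpa using this
      have hKeq : K = {∅, {c}} := by
        refine Subset.antisymm (fun s hsK => ?_) ?_
        · have hsub : s ⊆ {c} := subset_singleton_iff'.2 fun b hb => by
            by_contra hbc
            exact (hex b hbc) (hK.2 s hsK {b} (by simpa using hb))
          rcases subset_singleton_iff.1 hsub with rfl | rfl <;> simp
        · intro t ht
          rcases mem_insert.1 ht with rfl | h1
          · exact hK.1
          · exact mem_singleton.1 h1 ▸ hc
      rw [hKeq]; exact .point c

-- helpers about Sum images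
lemma inr_not_mem_inl_image {s : Finset V} {b : Bool} : Sum.inr b ∉ s.image Sum.inl := by simp

lemma bedge_subset {δ : Finset (V ⊕ Bool)} (h : δ ∈ bedgeC V) :
    δ ⊆ {Sum.inr false, Sum.inr true} := mem_powerset.1 (mem_of_mem_erase h)

lemma inl_not_mem_pair {u : V} :
    Sum.inl u ∉ ({Sum.inr false, Sum.inr true} : Finset (V ⊕ Bool)) := by simp

lemma pair_erase (b : Bool) :
    ({Sum.inr false, Sum.inr true} : Finset (V ⊕ Bool)).erase (Sum.inr b) = {Sum.inr (!b)} := by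
  cases b <;> ext z <;> simp [mem_erase] <;> aesop

lemma singleton_inr_mem_bedgeC (b : Bool) : ({Sum.inr b} : Finset (V ⊕ Bool)) ∈ bedgeC V := by
  cases b <;> simp [mem_bedgeC]

-- the map sending v to one of the new suspension points
def toSusp (v : V) (b : Bool) : V → V ⊕ Bool := fun u => if u = v then Sum.inr b else Sum.inl u

lemma toSusp_injective (v : V) (b : Bool) : Function.Injective (toSusp v b) := by
  intro x y hxy
  unfold toSusp at hxy
  by_cases hx : x = v <;> by_cases hy : y = v <;> simp [hx, hy] at hxy <;> simp [hx, hy, hxy]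

lemma image_toSusp_of_not_mem {s : Finset V} {v : V} (h : v ∉ s) (b : Bool) :
    s.image (toSusp v b) = s.image Sum.inl := by
  apply image_congr
  intro x hx
  have : x ≠ v := fun hh => h (hh ▸ hx)
  simp [toSusp, this]

lemma image_toSusp_of_mem {s : Finset V} {v : V} (h : v ∈ s) (b : Bool) :
    s.image (toSusp v b) = insert (Sum.inr b) ((s.erase v).image Sum.inl) := by
  conv_lhs => rw [← insert_erase h]
  rw [image_insert, image_toSusp_of_not_mem (notMem_erase _ _)]
  simp [toSusp]

lemma susp_eq (v : V) (K : Finset (Finset V)) :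
    susp v K = joinF (bedgeC V) (mapC Sum.inl (delOf K v)) ∪
      joinF (edgeC V) (mapC Sum.inl (linkOf K v)) := by
  unfold susp
  congr 1
  ext x
  simp only [mem_sdiff]
  constructor
  · rintro ⟨h1, h2⟩
    rcases mem_joinF.1 h1 with ⟨δ, hδ, t, ht, rfl⟩
    rcases mem_mapC.1 ht with ⟨σ, hσK, rfl⟩
    have hvσ : v ∉ σ := by
      intro hv
      exact h2 (mem_joinF.2 ⟨δ, hδ, σ.image Sum.inl,
        mem_mapC.2 ⟨σ, mem_filter.2 ⟨hσK, hv⟩, rfl⟩, rfl⟩)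
    exact mem_joinF.2 ⟨δ, hδ, σ.image Sum.inl,
      mem_mapC.2 ⟨σ, mem_delOf.2 ⟨hσK, hvσ⟩, rfl⟩, rfl⟩
  · intro h
    rcases mem_joinF.1 h with ⟨δ, hδ, t, ht, rfl⟩
    rcases mem_mapC.1 ht with ⟨σ, hσ, rfl⟩
    rcases mem_delOf.1 hσ with ⟨hσK, hvσ⟩
    constructor
    · exact mem_joinF.2 ⟨δ, hδ, σ.image Sum.inl, mem_mapC.2 ⟨σ, hσK, rfl⟩, rfl⟩
    · intro hx
      rcases mem_joinF.1 hx with ⟨δ', hδ', t', ht', heq⟩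
      rcases mem_mapC.1 ht' with ⟨σ', hσ', rfl⟩
      have hvmem : Sum.inl v ∈ δ' ∪ σ'.image Sum.inl :=
        mem_union_right _ (mem_image_of_mem _ (mem_filter.1 hσ').2)
      rw [← heq] at hvmem
      rcases mem_union.1 hvmem with h' | h'
      · exact inl_not_mem_pair (bedge_subset hδ h')
      · rcases mem_image.1 h' with ⟨z, hz, hz2⟩
        exact hvσ (Sum.inl_injective hz2 ▸ hz)

lemma mem_susp {v : V} {K : Finset (Finset V)} {x : Finset (V ⊕ Bool)} :
    x ∈ susp v K ↔
      (∃ δ ∈ bedgeC V, ∃ σ ∈ delOf K v, x = δ ∪ σ.image Sum.inl) ∨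
      (∃ δ ∈ edgeC V, ∃ τ ∈ linkOf K v, x = δ ∪ τ.image Sum.inl) := by
  rw [susp_eq, mem_union, mem_joinF, mem_joinF]
  constructor
  · rintro (⟨δ, hδ, t, ht, rfl⟩ | ⟨δ, hδ, t, ht, rfl⟩) <;>
      rcases mem_mapC.1 ht with ⟨σ, hσ, rfl⟩
    · exact Or.inl ⟨δ, hδ, σ, hσ, rfl⟩
    · exact Or.inr ⟨δ, hδ, σ, hσ, rfl⟩
  · rintro (⟨δ, hδ, σ, hσ, rfl⟩ | ⟨δ, hδ, σ, hσ, rfl⟩)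
    · exact Or.inl ⟨δ, hδ, _, mem_mapC.2 ⟨σ, hσ, rfl⟩, rfl⟩
    · exact Or.inr ⟨δ, hδ, _, mem_mapC.2 ⟨σ, hσ, rfl⟩, rfl⟩

lemma inr_not_mem_toSusp_image {s : Finset V} {v : V} (b : Bool) :
    Sum.inr b ∉ s.image (toSusp v (!b)) := by
  intro h
  rcases mem_image.1 h with ⟨z, hz, hz2⟩
  by_cases hzv : z = v <;> simp [toSusp, hzv] at hz2

lemma linkOf_susp_inr {K : Finset (Finset V)} (hK : IsComplex K) (v : V) (b : Bool) :
    linkOf (susp v K) (Sum.inr b) = mapC (toSusp v (!b)) K := by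
  ext x
  rw [mem_linkOf, mem_mapC]
  constructor
  · rintro ⟨y, hy, hby, rfl⟩
    rcases mem_susp.1 hy with ⟨δ, hδ, σ, hσ, rfl⟩ | ⟨δ, hδ, τ, hτ, rfl⟩
    · have hbδ : Sum.inr b ∈ δ := (mem_union.1 hby).resolve_right inr_not_mem_inl_image
      rcases mem_delOf.1 hσ with ⟨hσK, hvσ⟩
      have hδe : δ.erase (Sum.inr b) = ∅ := by
        rcases mem_bedgeC.1 hδ with rfl | rfl | rfl
        · simp
        · have hb : b = false := by simpa using hbδ
          subst hb; simp
        · have hb : b = true := by simpa using hbδ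
          subst hb; simp
      refine ⟨σ, hσK, ?_⟩
      rw [erase_union_distrib, erase_eq_of_notMem inr_not_mem_inl_image, hδe, empty_union,
        image_toSusp_of_not_mem hvσ]
    · have hbδ : Sum.inr b ∈ δ := (mem_union.1 hby).resolve_right inr_not_mem_inl_image
      rcases mem_linkOf.1 hτ with ⟨s, hsK, hvs, rfl⟩
      rw [erase_union_distrib, erase_eq_of_notMem inr_not_mem_inl_image]
      have hδsub : δ.erase (Sum.inr b) ⊆ {Sum.inr (!b)} := by
        rw [← pair_erase b]; exact erase_subset_erase _ (mem_edgeC.1 hδ)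
      rcases subset_singleton_iff.1 hδsub with h0 | h0 <;> rw [h0]
      · refine ⟨s.erase v, hK.2 s hsK _ (erase_subset _ _), ?_⟩
        rw [image_toSusp_of_not_mem (notMem_erase _ _), empty_union]
      · refine ⟨s, hsK, ?_⟩
        rw [image_toSusp_of_mem hvs, insert_eq]
  · rintro ⟨s, hsK, rfl⟩
    have hnm : Sum.inr b ∉ s.image (toSusp v (!b)) := inr_not_mem_toSusp_image b
    refine ⟨insert (Sum.inr b) (s.image (toSusp v (!b))), ?_, mem_insert_self _ _,
      (erase_insert hnm).symm⟩
    by_cases hvs : v ∈ s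
    · refine mem_susp.2 (Or.inr ⟨{Sum.inr b, Sum.inr (!b)}, ?_, s.erase v,
        mem_linkOf.2 ⟨s, hsK, hvs, rfl⟩, ?_⟩)
      · rw [mem_edgeC]; intro z hz
        rcases mem_insert.1 hz with rfl | hz
        · cases b <;> simp
        · rw [mem_singleton.1 hz]; cases b <;> simp
      · rw [image_toSusp_of_mem hvs, insert_union, ← insert_eq]
    · refine mem_susp.2 (Or.inl ⟨{Sum.inr b}, singleton_inr_mem_bedgeC b, s,
        mem_delOf.2 ⟨hsK, hvs⟩, ?_⟩)
      rw [image_toSusp_of_not_mem hvs, ← insert_eq]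

lemma delOf_susp_inr {K : Finset (Finset V)} (hK : IsComplex K) (v : V) (b : Bool) :
    delOf (susp v K) (Sum.inr b) =
      joinF ({∅, {Sum.inr (!b)}} : Finset (Finset (V ⊕ Bool))) (mapC Sum.inl (delOf K v)) := by
  ext x
  rw [mem_delOf, mem_joinF]
  constructor
  · rintro ⟨hx, hbx⟩
    rcases mem_susp.1 hx with ⟨δ, hδ, σ, hσ, rfl⟩ | ⟨δ, hδ, τ, hτ, rfl⟩
    · have hbδ : Sum.inr b ∉ δ := fun h => hbx (mem_union_left _ h)
      refine ⟨δ, ?_, σ.image Sum.inl, mem_mapC.2 ⟨σ, hσ, rfl⟩, rfl⟩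
      rcases mem_bedgeC.1 hδ with rfl | rfl | rfl
      · simp
      · cases b
        · simp at hbδ
        · simp
      · cases b
        · simp
        · simp at hbδ
    · have hbδ : Sum.inr b ∉ δ := fun h => hbx (mem_union_left _ h)
      have hδsub : δ ⊆ {Sum.inr (!b)} := by
        intro z hz
        have hz2 := mem_edgeC.1 hδ hz
        have : z ≠ Sum.inr b := fun h => hbδ (h ▸ hz)
        rw [← pair_erase b]
        exact mem_erase.2 ⟨this, hz2⟩
      refine ⟨δ, ?_, τ.image Sum.inl,
        mem_mapC.2 ⟨τ, linkOf_subset_delOf hK v hτ, rfl⟩, rfl⟩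
      rcases subset_singleton_iff.1 hδsub with rfl | rfl <;> simp
  · rintro ⟨δ, hδ, t, ht, rfl⟩
    rcases mem_mapC.1 ht with ⟨σ, hσ, rfl⟩
    have hδb : δ ∈ bedgeC V := by
      rcases mem_insert.1 hδ with rfl | h
      · exact mem_bedgeC.2 (Or.inl rfl)
      · rw [mem_singleton.1 h]; exact singleton_inr_mem_bedgeC (!b)
    refine ⟨mem_susp.2 (Or.inl ⟨δ, hδb, σ, hσ, rfl⟩), ?_⟩
    intro hmem
    rcases mem_union.1 hmem with h | h
    · rcases mem_insert.1 hδ with rfl | h'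
      · exact notMem_empty _ h
      · rw [mem_singleton.1 h'] at h
        have : b = !b := by simpa using h
        simp at this
    · exact inr_not_mem_inl_image h

lemma isComplex_joinF_mapC {E : Finset (Finset (V ⊕ Bool))}
    (hE0 : ∅ ∈ E) (hEc : ∀ δ ∈ E, ∀ γ ⊆ δ, γ ∈ E)
    {L : Finset (Finset V)} (hL : IsComplex L) :
    IsComplex (joinF E (mapC Sum.inl L)) := by
  constructor
  · exact mem_joinF.2 ⟨∅, hE0, ∅, mem_mapC.2 ⟨∅, hL.1, by simp⟩, by simp⟩
  · intro s hs t ht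
    rcases mem_joinF.1 hs with ⟨δ, hδ, T, hT, rfl⟩
    rcases mem_mapC.1 hT with ⟨σ, hσ, rfl⟩
    have h1 : t ∩ δ ∈ E := hEc δ hδ _ (inter_subset_right)
    have h2 : t \ δ ⊆ σ.image Sum.inl := by
      intro z hz
      rcases mem_sdiff.1 hz with ⟨hzt, hzδ⟩
      exact (mem_union.1 (ht hzt)).resolve_left hzδ
    rcases subset_image_iff.1 h2 with ⟨σ', hσ', hσ'eq⟩
    have ht' : t = (t ∩ δ) ∪ σ'.image Sum.inl := by
      rw [hσ'eq]
      ext z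
      simp only [mem_union, mem_inter, mem_sdiff]
      constructor
      · intro hz
        by_cases hzδ : z ∈ δ
        · exact Or.inl ⟨hz, hzδ⟩
        · exact Or.inr ⟨hz, hzδ⟩
      · rintro (⟨hz, _⟩ | ⟨hz, _⟩) <;> exact hz
    rw [ht']
    exact mem_joinF.2 ⟨t ∩ δ, h1, σ'.image Sum.inl,
      mem_mapC.2 ⟨σ', hL.2 σ hσ σ' hσ', rfl⟩, rfl⟩

lemma linkOf_eq_empty {K : Finset (Finset V)} (hK : IsComplex K) {v : V} (hv : {v} ∉ K) :
    linkOf K v = ∅ := by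
  rw [eq_empty_iff_forall_notMem]
  intro x hx
  rcases mem_linkOf.1 hx with ⟨s, hsK, hvs, rfl⟩
  exact hv (hK.2 s hsK {v} (by simpa using hvs))

lemma isComplex_union {A B : Finset (Finset V)} (hA : IsComplex A) (hB : IsComplex B) :
    IsComplex (A ∪ B) := by
  refine ⟨mem_union_left _ hA.1, fun s hs t ht => ?_⟩
  rcases mem_union.1 hs with h | h
  · exact mem_union_left _ (hA.2 s h t ht)
  · exact mem_union_right _ (hB.2 s h t ht)

lemma bedgeC_closed : ∀ δ ∈ bedgeC V, ∀ γ ⊆ δ, γ ∈ bedgeC V := by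
  intro δ hδ γ hγ
  rcases mem_bedgeC.1 hδ with rfl | rfl | rfl
  · rw [subset_empty.1 hγ]; exact mem_bedgeC.2 (Or.inl rfl)
  · rcases subset_singleton_iff.1 hγ with rfl | rfl
    · exact mem_bedgeC.2 (Or.inl rfl)
    · exact mem_bedgeC.2 (Or.inr (Or.inl rfl))
  · rcases subset_singleton_iff.1 hγ with rfl | rfl
    · exact mem_bedgeC.2 (Or.inl rfl)
    · exact mem_bedgeC.2 (Or.inr (Or.inr rfl))

lemma isComplex_susp {K : Finset (Finset V)} (hK : IsComplex K) (v : V) :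
    IsComplex (susp v K) := by
  rw [susp_eq]
  by_cases hv : {v} ∈ K
  · exact isComplex_union
      (isComplex_joinF_mapC (mem_bedgeC.2 (Or.inl rfl)) bedgeC_closed (isComplex_delOf hK v))
      (isComplex_joinF_mapC (mem_powerset.2 (empty_subset _))
        (fun δ hδ γ hγ => mem_powerset.2 (hγ.trans (mem_powerset.1 hδ)))
        (isComplex_linkOf hK hv))
  · have : linkOf K v = ∅ := linkOf_eq_empty hK hv
    rw [this]
    have : mapC (Sum.inl : V → V ⊕ Bool) (∅ : Finset (Finset V)) = ∅ := by simp [mapC]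
    rw [this]
    have : joinF (edgeC V) (∅ : Finset (Finset (V ⊕ Bool))) = ∅ := by simp [joinF]
    rw [this, union_empty]
    exact isComplex_joinF_mapC (mem_bedgeC.2 (Or.inl rfl)) bedgeC_closed (isComplex_delOf hK v)

lemma inl_not_mem_bedge_elt {δ : Finset (V ⊕ Bool)} (hδ : δ ⊆ {Sum.inr false, Sum.inr true})
    {u : V} : Sum.inl u ∉ δ := fun h => inl_not_mem_pair (hδ h)

lemma linkOf_susp_inl {K : Finset (Finset V)} (hK : IsComplex K) {v u : V} (huv : u ≠ v) :
    linkOf (susp v K) (Sum.inl u) = susp v (linkOf K u) := by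
  ext x
  rw [mem_linkOf, mem_susp]
  constructor
  · rintro ⟨y, hy, huy, rfl⟩
    rcases mem_susp.1 hy with ⟨δ, hδ, σ, hσ, rfl⟩ | ⟨δ, hδ, τ, hτ, rfl⟩
    · have huσ : u ∈ σ := by
        rcases mem_union.1 huy with h | h
        · exact absurd h (inl_not_mem_bedge_elt (bedge_subset hδ))
        · simpa using h
      rcases mem_delOf.1 hσ with ⟨hσK, hvσ⟩
      refine Or.inl ⟨δ, hδ, σ.erase u, ?_, ?_⟩
      · exact mem_delOf.2 ⟨mem_linkOf.2 ⟨σ, hσK, huσ, rfl⟩,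
          fun h => hvσ (mem_of_mem_erase h)⟩
      · rw [erase_union_distrib, erase_eq_of_notMem (inl_not_mem_bedge_elt (bedge_subset hδ)),
          image_erase Sum.inl_injective]
    · have huτ : u ∈ τ := by
        rcases mem_union.1 huy with h | h
        · exact absurd h (inl_not_mem_bedge_elt (mem_edgeC.1 hδ))
        · simpa using h
      rcases mem_linkOf.1 hτ with ⟨s, hsK, hvs, rfl⟩
      refine Or.inr ⟨δ, hδ, (s.erase v).erase u, ?_, ?_⟩
      · refine mem_linkOf.2 ⟨s.erase u, mem_linkOf.2 ⟨s, hsK, mem_of_mem_erase huτ, rfl⟩,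
          mem_erase.2 ⟨Ne.symm huv, hvs⟩, ?_⟩
        rw [erase_right_comm]
      · rw [erase_union_distrib, erase_eq_of_notMem (inl_not_mem_bedge_elt (mem_edgeC.1 hδ)),
          ← image_erase Sum.inl_injective]
  · rintro (⟨δ, hδ, σ', hσ', rfl⟩ | ⟨δ, hδ, τ', hτ', rfl⟩)
    · rcases mem_delOf.1 hσ' with ⟨hσ'l, hvσ'⟩
      rcases mem_linkOf.1 hσ'l with ⟨s, hsK, hus, rfl⟩
      have hvs : v ∉ s := fun h => hvσ' (mem_erase.2 ⟨Ne.symm huv, h⟩)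
      refine ⟨δ ∪ s.image Sum.inl, mem_susp.2 (Or.inl ⟨δ, hδ, s, mem_delOf.2 ⟨hsK, hvs⟩, rfl⟩),
        mem_union_right _ (by simpa using hus), ?_⟩
      rw [erase_union_distrib, erase_eq_of_notMem (inl_not_mem_bedge_elt (bedge_subset hδ)),
        image_erase Sum.inl_injective]
    · rcases mem_linkOf.1 hτ' with ⟨t, htl, hvt, rfl⟩
      rcases mem_linkOf.1 htl with ⟨s, hsK, hus, rfl⟩
      have hvs : v ∈ s := mem_of_mem_erase hvt
      refine ⟨δ ∪ (s.erase v).image Sum.inl,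
        mem_susp.2 (Or.inr ⟨δ, hδ, s.erase v, mem_linkOf.2 ⟨s, hsK, hvs, rfl⟩, rfl⟩),
        mem_union_right _ (by simp only [mem_image]; exact ⟨u, mem_erase.2 ⟨huv, hus⟩, rfl⟩), ?_⟩
      rw [erase_union_distrib, erase_eq_of_notMem (inl_not_mem_bedge_elt (mem_edgeC.1 hδ)),
        ← image_erase Sum.inl_injective, erase_right_comm]

lemma delOf_susp_inl {K : Finset (Finset V)} (hK : IsComplex K) {v u : V} (huv : u ≠ v) :
    delOf (susp v K) (Sum.inl u) = susp v (delOf K u) := by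
  ext x
  rw [mem_delOf]
  constructor
  · rintro ⟨hx, hux⟩
    refine mem_susp.2 ?_
    rcases mem_susp.1 hx with ⟨δ, hδ, σ, hσ, rfl⟩ | ⟨δ, hδ, τ, hτ, rfl⟩
    · rcases mem_delOf.1 hσ with ⟨hσK, hvσ⟩
      have huσ : u ∉ σ := fun h => hux (mem_union_right _ (by simpa using h))
      exact Or.inl ⟨δ, hδ, σ, mem_delOf.2 ⟨mem_delOf.2 ⟨hσK, huσ⟩, hvσ⟩, rfl⟩
    · rcases mem_linkOf.1 hτ with ⟨s, hsK, hvs, rfl⟩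
      have huτ : u ∉ s.erase v := fun h => hux (mem_union_right _ (by simpa using h))
      refine Or.inr ⟨δ, hδ, s.erase v, ?_, rfl⟩
      refine mem_linkOf.2 ⟨s.erase u, mem_delOf.2 ⟨hK.2 s hsK _ (erase_subset _ _),
        notMem_erase _ _⟩, mem_erase.2 ⟨Ne.symm huv, hvs⟩, ?_⟩
      rw [erase_right_comm, erase_eq_of_notMem huτ]
  · intro hx
    rcases mem_susp.1 hx with ⟨δ, hδ, σ, hσ, rfl⟩ | ⟨δ, hδ, τ, hτ, rfl⟩
    · rcases mem_delOf.1 hσ with ⟨hσd, hvσ⟩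
      rcases mem_delOf.1 hσd with ⟨hσK, huσ⟩
      refine ⟨mem_susp.2 (Or.inl ⟨δ, hδ, σ, mem_delOf.2 ⟨hσK, hvσ⟩, rfl⟩), ?_⟩
      intro h
      rcases mem_union.1 h with h | h
      · exact inl_not_mem_bedge_elt (bedge_subset hδ) h
      · exact huσ (by simpa using h)
    · rcases mem_linkOf.1 hτ with ⟨s, hsd, hvs, rfl⟩
      rcases mem_delOf.1 hsd with ⟨hsK, hus⟩
      refine ⟨mem_susp.2 (Or.inr ⟨δ, hδ, s.erase v, mem_linkOf.2 ⟨s, hsK, hvs, rfl⟩, rfl⟩), ?_⟩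
      intro h
      rcases mem_union.1 h with h | h
      · exact inl_not_mem_bedge_elt (mem_edgeC.1 hδ) h
      · exact hus (mem_of_mem_erase (by simpa using h))

lemma singleton_inr_mem_susp {K : Finset (Finset V)} (hK : IsComplex K) (v : V) (b : Bool) :
    ({Sum.inr b} : Finset (V ⊕ Bool)) ∈ susp v K :=
  mem_susp.2 (Or.inl ⟨{Sum.inr b}, singleton_inr_mem_bedgeC b, ∅,
    mem_delOf.2 ⟨hK.1, notMem_empty _⟩, by simp⟩)

lemma singleton_inl_decomp {δ : Finset (V ⊕ Bool)}
    (hδ : δ ⊆ {Sum.inr false, Sum.inr true}) {σ : Finset V} {u : V}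
    (h : ({Sum.inl u} : Finset (V ⊕ Bool)) = δ ∪ σ.image Sum.inl) : σ = {u} := by
  have hδe : δ = ∅ := by
    rw [eq_empty_iff_forall_notMem]; intro z hz
    have hzu : z ∈ ({Sum.inl u} : Finset (V ⊕ Bool)) := h ▸ mem_union_left _ hz
    rw [mem_singleton.1 hzu] at hz
    exact inl_not_mem_pair (hδ hz)
  rw [hδe, empty_union] at h
  have h2 : σ.image Sum.inl = ({u} : Finset V).image (Sum.inl : V → V ⊕ Bool) := by rw [← h]; simp
  exact Finset.image_injective Sum.inl_injective h2

lemma mem_of_singleton_inl_mem_susp {K : Finset (Finset V)} (hK : IsComplex K) {v u : V}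
    (h : ({Sum.inl u} : Finset (V ⊕ Bool)) ∈ susp v K) : {u} ∈ K := by
  rcases mem_susp.1 h with ⟨δ, hδ, σ, hσ, heq⟩ | ⟨δ, hδ, τ, hτ, heq⟩
  · rw [singleton_inl_decomp (bedge_subset hδ) heq] at hσ
    exact (mem_delOf.1 hσ).1
  · rw [singleton_inl_decomp (mem_edgeC.1 hδ) heq] at hτ
    exact linkOf_subset hK v hτ

lemma singleton_inl_v_not_mem_susp {K : Finset (Finset V)} (v : V) :
    ({Sum.inl v} : Finset (V ⊕ Bool)) ∉ susp v K := by
  intro h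
  rcases mem_susp.1 h with ⟨δ, hδ, σ, hσ, heq⟩ | ⟨δ, hδ, τ, hτ, heq⟩
  · rw [singleton_inl_decomp (bedge_subset hδ) heq] at hσ
    exact (mem_delOf.1 hσ).2 (mem_singleton_self v)
  · rw [singleton_inl_decomp (mem_edgeC.1 hδ) heq] at hτ
    rcases mem_linkOf.1 hτ with ⟨s, _, _, hs⟩
    have : v ∈ s.erase v := hs ▸ mem_singleton_self v
    exact (mem_erase.1 this).1 rfl

lemma nonEvasive_susp {K : Finset (Finset V)} (hK : IsComplex K) (v : V)
    (h : NonEvasive K) : NonEvasive (susp v K) := by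
  refine .step _ (Sum.inr false) (singleton_inr_mem_susp hK v false) ?_ ?_
  · rw [linkOf_susp_inr hK v false]
    exact nonEvasive_mapC (toSusp_injective v (!false)) h
  · rw [delOf_susp_inr hK v false]
    simp only [Bool.not_false]
    set J := joinF ({∅, {Sum.inr true}} : Finset (Finset (V ⊕ Bool)))
      (mapC Sum.inl (delOf K v)) with hJ
    refine cone_nonEvasive J.card J (Sum.inr true) le_rfl ?_ ?_
    · refine isComplex_joinF_mapC (mem_insert_self _ _) ?_ (isComplex_delOf hK v)
      intro δ hδ γ hγ
      rcases mem_insert.1 hδ with rfl | hδ1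
      · rw [subset_empty.1 hγ]; exact mem_insert_self _ _
      · rw [mem_singleton.1 hδ1] at hγ
        rcases subset_singleton_iff.1 hγ with rfl | rfl
        · exact mem_insert_self _ _
        · exact mem_insert_of_mem (mem_singleton_self _)
    · intro s hs
      rcases mem_joinF.1 hs with ⟨δ, hδ, T, hT, rfl⟩
      refine mem_joinF.2 ⟨{Sum.inr true}, mem_insert_of_mem (mem_singleton_self _), T, hT, ?_⟩
      rcases mem_insert.1 hδ with rfl | hδ1
      · rw [empty_union, insert_eq]
      · rw [mem_singleton.1 hδ1, ← insert_eq, insert_idem]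

lemma nonEvasive_of_susp (v : V) : ∀ n (K : Finset (Finset V)), K.card ≤ n → IsComplex K →
    NonEvasive (susp v K) → NonEvasive K := by
  intro n
  induction n with
  | zero =>
    intro K hcard hK _
    have : K = ∅ := card_eq_zero.1 (Nat.le_zero.1 hcard)
    exact absurd (this ▸ hK.1) (notMem_empty _)
  | succ n ih =>
    intro K hcard hK h
    generalize hS : susp v K = S at h
    cases h with
    | point w =>
      have h1 : ({Sum.inr false} : Finset (V ⊕ Bool)) ∈ ({∅, {w}} : Finset (Finset (V ⊕ Bool))) := by
        rw [← hS] at *; exact singleton_inr_mem_susp hK v false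
      have h2 : ({Sum.inr true} : Finset (V ⊕ Bool)) ∈ ({∅, {w}} : Finset (Finset (V ⊕ Bool))) := by
        rw [← hS] at *; exact singleton_inr_mem_susp hK v true
      have e1 : ({Sum.inr false} : Finset (V ⊕ Bool)) = {w} := by
        rcases mem_insert.1 h1 with h' | h'
        · exact absurd h' (singleton_ne_empty _)
        · exact mem_singleton.1 h'
      have e2 : ({Sum.inr true} : Finset (V ⊕ Bool)) = {w} := by
        rcases mem_insert.1 h2 with h' | h'
        · exact absurd h' (singleton_ne_empty _)
        · exact mem_singleton.1 h'
      have : (Sum.inr false : V ⊕ Bool) = Sum.inr true :=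
        singleton_injective (e1.trans e2.symm)
      simp at this
    | step S w hw hl hd =>
      subst hS
      cases w with
      | inl u =>
        have huv : u ≠ v := by
          rintro rfl
          exact singleton_inl_v_not_mem_susp u hw
        have huK : {u} ∈ K := mem_of_singleton_inl_mem_susp hK hw
        have hss : delOf K u ⊂ K :=
          (ssubset_iff_of_subset (filter_subset _ _)).2
            ⟨{u}, huK, by simp [delOf, mem_filter]⟩
        have hdcard : (delOf K u).card ≤ n :=
          Nat.lt_succ_iff.1 (lt_of_lt_of_le (card_lt_card hss) hcard)
        have hlcard : (linkOf K u).card ≤ n :=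
          le_trans (card_le_card (linkOf_subset_delOf hK u)) hdcard
        refine .step K u huK ?_ ?_
        · rw [linkOf_susp_inl hK huv] at hl
          exact ih (linkOf K u) hlcard (isComplex_linkOf hK huK) hl
        · rw [delOf_susp_inl hK huv] at hd
          exact ih (delOf K u) hdcard (isComplex_delOf hK u) hd
      | inr b =>
        rw [linkOf_susp_inr hK v b] at hl
        exact nonEvasive_of_mapC (toSusp_injective v (!b)) hl


end Aux


/-- The one-point suspension `Susp₁(v,K)` is non-evasive if and only
if `K` is non-evasive. -/
theorem susp_nonEvasive (K : Finset (Finset V)) (v : V)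
    (hK : IsComplex K) (hv : {v} ∈ K) :
    NonEvasive (susp v K) ↔ NonEvasive K :=
  ⟨fun h => nonEvasive_of_susp v K.card K le_rfl hK h, fun h => nonEvasive_susp hK v h⟩
end

section
/- If a simplicial complex K admits a perfect acyclic (Morse) matching on its Hasse diagram (i.e., K is collapsible), then the one-point suspension Susp₁(v,K) is collapsible. -/
open Finset

variable {V : Type} [DecidableEq V]

/-- `t` covers `s` in the face poset: `s ⊆ t` with exactly one more element. -/
def CoversF {W : Type} [DecidableEq W] (s t : Finset W) : Prop :=
  s ⊆ t ∧ t.card = s.card + 1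

/-- `M` is a perfect matching on the Hasse diagram of `K` (whose faces include `∅`):
each pair consists of a face and a face covering it, and every face of `K` belongs to
exactly one pair. -/
def IsPerfectMatching {W : Type} [DecidableEq W] (K : Finset (Finset W))
    (M : Finset (Finset W × Finset W)) : Prop :=
  (∀ p ∈ M, p.1 ∈ K ∧ p.2 ∈ K ∧ CoversF p.1 p.2) ∧
    ∀ s ∈ K, ∃! p, p ∈ M ∧ (p.1 = s ∨ p.2 = s)

/-- The modified Hasse diagram: cover edges are directed upward, except that the
edges of the matching `M` are reversed. -/
def MorseRel {W : Type} [DecidableEq W] (K : Finset (Finset W))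
    (M : Finset (Finset W × Finset W)) (s t : Finset W) : Prop :=
  s ∈ K ∧ t ∈ K ∧ ((CoversF s t ∧ (s, t) ∉ M) ∨ (CoversF t s ∧ (t, s) ∈ M))

/-- `K` is collapsible: it admits a perfect matching on its Hasse diagram that is
acyclic (reversing the matched edges leaves the digraph without directed cycles). -/
def Collapsible {W : Type} [DecidableEq W] (K : Finset (Finset W)) : Prop :=
  ∃ M, IsPerfectMatching K M ∧ ∀ s, ¬ Relation.TransGen (MorseRel K M) s s

namespace SuspProof

variable {V : Type} [DecidableEq V]

/-- Embedding of a face of `K` into the suspension vertex set. -/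
def sEmb (t : Finset V) : Finset (V ⊕ Bool) := t.image Sum.inl

@[simp] lemma inl_mem_sEmb {t : Finset V} {a : V} : Sum.inl a ∈ sEmb t ↔ a ∈ t := by
  simp [sEmb]

@[simp] lemma inr_notMem_sEmb {t : Finset V} {b : Bool} : Sum.inr b ∉ sEmb t := by
  simp [sEmb]

@[simp] lemma sEmb_card {t : Finset V} : (sEmb t).card = t.card :=
  Finset.card_image_of_injective _ Sum.inl_injective

lemma sEmb_subset {t s : Finset V} (h : t ⊆ s) : sEmb t ⊆ sEmb s :=
  Finset.image_subset_image h

/-- Extract the `V`-part of a face of the suspension. -/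
def sCore (u : Finset (V ⊕ Bool)) : Finset V :=
  u.biUnion fun x => Sum.elim (fun a => {a}) (fun _ => ∅) x

@[simp] lemma mem_sCore {u : Finset (V ⊕ Bool)} {a : V} : a ∈ sCore u ↔ Sum.inl a ∈ u := by
  simp only [sCore, Finset.mem_biUnion]
  constructor
  · rintro ⟨x, hx, ha⟩
    cases x with
    | inl b => simp only [Sum.elim_inl, Finset.mem_singleton] at ha; subst ha; exact hx
    | inr b => simp at ha
  · intro h; exact ⟨Sum.inl a, h, by simp⟩

@[simp] lemma sCore_sEmb (t : Finset V) : sCore (sEmb t) = t := by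
  ext a; simp

@[simp] lemma sCore_insert_inr (b : Bool) (u : Finset (V ⊕ Bool)) :
    sCore (insert (Sum.inr b) u) = sCore u := by
  ext a; simp

lemma sEmb_inj {t s : Finset V} (h : sEmb t = sEmb s) : t = s := by
  have := congrArg sCore h; simpa using this

lemma sEmb_subset_iff {t s : Finset V} : sEmb t ⊆ sEmb s ↔ t ⊆ s := by
  constructor
  · intro h a ha; simpa using h (by simpa using ha : Sum.inl a ∈ sEmb t)
  · exact sEmb_subset

lemma mem_joinF {A B : Finset (Finset (V ⊕ Bool))} {u : Finset (V ⊕ Bool)} :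
    u ∈ joinF A B ↔ ∃ a ∈ A, ∃ b ∈ B, a ∪ b = u := by
  simp [joinF, Finset.mem_product]
  tauto

lemma mem_mapC_inl {K : Finset (Finset V)} {u : Finset (V ⊕ Bool)} :
    u ∈ mapC Sum.inl K ↔ ∃ t ∈ K, sEmb t = u := by
  simp [mapC, sEmb]

end SuspProof
namespace SuspProof

variable {V : Type} [DecidableEq V]

lemma mem_bedgeC {a : Finset (V ⊕ Bool)} :
    a ∈ bedgeC V ↔ a ⊆ {Sum.inr false, Sum.inr true} ∧ a ≠ {Sum.inr false, Sum.inr true} := by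
  simp [bedgeC, edgeC, Finset.mem_erase, and_comm]

lemma mem_edgeC {a : Finset (V ⊕ Bool)} :
    a ∈ edgeC V ↔ a ⊆ {Sum.inr false, Sum.inr true} := by
  simp [edgeC]

lemma inlv_of_starJoin {K : Finset (Finset V)} {v : V} {u : Finset (V ⊕ Bool)}
    (h : u ∈ joinF (bedgeC V) (mapC Sum.inl (starOf K v))) : Sum.inl v ∈ u := by
  rw [mem_joinF] at h
  obtain ⟨a, _, b, hb, rfl⟩ := h
  simp only [mapC, starOf, Finset.mem_image, Finset.mem_filter] at hb
  obtain ⟨s, ⟨_, hvs⟩, rfl⟩ := hb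
  exact Finset.mem_union_right _ (Finset.mem_image_of_mem _ hvs)

lemma subset_pair_cases {a : Finset (V ⊕ Bool)}
    (h : a ⊆ {Sum.inr false, Sum.inr true}) :
    a = ∅ ∨ a = {Sum.inr false} ∨ a = {Sum.inr true} ∨ a = {Sum.inr false, Sum.inr true} := by
  by_cases h1 : (Sum.inr false : V ⊕ Bool) ∈ a <;> by_cases h2 : (Sum.inr true : V ⊕ Bool) ∈ a
  · refine Or.inr (Or.inr (Or.inr (Finset.Subset.antisymm h ?_)))
    intro x hx
    simp only [Finset.mem_insert, Finset.mem_singleton] at hx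
    rcases hx with rfl | rfl <;> assumption
  · refine Or.inr (Or.inl (Finset.Subset.antisymm ?_ (by simpa using h1)))
    intro x hx
    have := h hx
    simp only [Finset.mem_insert, Finset.mem_singleton] at this ⊢
    rcases this with rfl | rfl
    · rfl
    · exact absurd hx h2
  · refine Or.inr (Or.inr (Or.inl (Finset.Subset.antisymm ?_ (by simpa using h2))))
    intro x hx
    have := h hx
    simp only [Finset.mem_insert, Finset.mem_singleton] at this ⊢
    rcases this with rfl | rfl
    · exact absurd hx h1
    · rfl
  · refine Or.inl (Finset.eq_empty_of_forall_notMem fun x hx => ?_)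
    have := h hx
    simp only [Finset.mem_insert, Finset.mem_singleton] at this
    rcases this with rfl | rfl
    · exact h1 hx
    · exact h2 hx

/-- The four membership constructors for `susp`. -/
lemma sEmb_mem_susp {K : Finset (Finset V)} {v : V} {t : Finset V}
    (ht : t ∈ K) (hvt : v ∉ t) : sEmb t ∈ susp v K := by
  apply Finset.mem_union_left
  rw [Finset.mem_sdiff]
  constructor
  · rw [mem_joinF]
    refine ⟨∅, ?_, sEmb t, ?_, by simp⟩
    · rw [mem_bedgeC]
      constructor
      · exact Finset.empty_subset _
      · intro h; exact absurd (h ▸ Finset.mem_insert_self _ _) (Finset.notMem_empty _)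
    · exact mem_mapC_inl.2 ⟨t, ht, rfl⟩
  · intro h
    have := inlv_of_starJoin h
    rw [inl_mem_sEmb] at this
    exact hvt this

lemma insert_f_mem_susp {K : Finset (Finset V)} {v : V} {t : Finset V} {b : Bool}
    (ht : t ∈ K) (hvt : v ∉ t) : insert (Sum.inr b) (sEmb t) ∈ susp v K := by
  apply Finset.mem_union_left
  rw [Finset.mem_sdiff]
  constructor
  · rw [mem_joinF]
    refine ⟨{Sum.inr b}, ?_, sEmb t, mem_mapC_inl.2 ⟨t, ht, rfl⟩, ?_⟩
    · rw [mem_bedgeC]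
      constructor
      · cases b <;> intro x hx <;> simp_all
      · intro h
        have h1 : (Sum.inr false : V ⊕ Bool) ∈ ({Sum.inr b} : Finset (V ⊕ Bool)) :=
          h ▸ Finset.mem_insert_self _ _
        have h2 : (Sum.inr true : V ⊕ Bool) ∈ ({Sum.inr b} : Finset (V ⊕ Bool)) := by
          rw [h]; simp
        simp only [Finset.mem_singleton] at h1 h2
        rw [← h2] at h1
        simp at h1
    · rw [Finset.insert_eq]
  · intro h
    have := inlv_of_starJoin h
    simp only [Finset.mem_insert] at this
    rcases this with h' | h'
    · simp at h'
    · rw [inl_mem_sEmb] at h'; exact hvt h'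

lemma class2_mem_susp {K : Finset (Finset V)} {v : V} {t : Finset V}
    (ht : insert v t ∈ K) (hvt : v ∉ t) :
    insert (Sum.inr true) (insert (Sum.inr false) (sEmb t)) ∈ susp v K := by
  apply Finset.mem_union_right
  rw [mem_joinF]
  refine ⟨{Sum.inr false, Sum.inr true}, mem_edgeC.2 (Finset.Subset.refl _), sEmb t, ?_, ?_⟩
  · simp only [mapC, Finset.mem_image]
    refine ⟨t, ?_, rfl⟩
    simp only [linkOf, Finset.mem_image, Finset.mem_filter]
    exact ⟨insert v t, ⟨ht, Finset.mem_insert_self _ _⟩, Finset.erase_insert hvt⟩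
  · rw [Finset.insert_union, ← Finset.insert_eq, Finset.insert_comm]

/-- Classification of the faces of `susp v K`. -/
lemma mem_susp_iff {K : Finset (Finset V)} {v : V} (hK : IsComplex K) {u : Finset (V ⊕ Bool)} :
    u ∈ susp v K ↔ ∃ t, t ∈ K ∧ v ∉ t ∧
      (u = sEmb t ∨ u = insert (Sum.inr false) (sEmb t) ∨ u = insert (Sum.inr true) (sEmb t) ∨
        (insert v t ∈ K ∧ u = insert (Sum.inr true) (insert (Sum.inr false) (sEmb t)))) := by
  constructor
  · intro hu
    rcases Finset.mem_union.1 hu with h | h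
    · rw [Finset.mem_sdiff] at h
      obtain ⟨h1, h2⟩ := h
      rw [mem_joinF] at h1
      obtain ⟨a, ha, b, hb, rfl⟩ := h1
      obtain ⟨t, htK, rfl⟩ := mem_mapC_inl.1 hb
      have hvt : v ∉ t := by
        intro hvt
        apply h2
        rw [mem_joinF]
        exact ⟨a, ha, sEmb t, by
          simp only [mapC, Finset.mem_image]
          exact ⟨t, Finset.mem_filter.2 ⟨htK, hvt⟩, rfl⟩, rfl⟩
      rw [mem_bedgeC] at ha
      rcases subset_pair_cases ha.1 with rfl | rfl | rfl | rfl
      · exact ⟨t, htK, hvt, Or.inl (by simp)⟩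
      · exact ⟨t, htK, hvt, Or.inr (Or.inl (by rw [Finset.insert_eq]))⟩
      · exact ⟨t, htK, hvt, Or.inr (Or.inr (Or.inl (by rw [Finset.insert_eq])))⟩
      · exact absurd rfl ha.2
    · rw [mem_joinF] at h
      obtain ⟨a, ha, b, hb, rfl⟩ := h
      simp only [mapC, linkOf, Finset.mem_image] at hb
      obtain ⟨t, ht, rfl⟩ := hb
      obtain ⟨s, hs, rfl⟩ := ht
      rw [Finset.mem_filter] at hs
      have hvt : v ∉ s.erase v := Finset.notMem_erase _ _
      have hins : insert v (s.erase v) = s := Finset.insert_erase hs.2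
      have htK : s.erase v ∈ K := hK.2 s hs.1 _ (Finset.erase_subset _ _)
      rw [mem_edgeC] at ha
      rcases subset_pair_cases ha with rfl | rfl | rfl | rfl
      · exact ⟨s.erase v, htK, hvt, Or.inl (by simp [sEmb])⟩
      · exact ⟨s.erase v, htK, hvt, Or.inr (Or.inl (by rw [Finset.insert_eq]; rfl))⟩
      · exact ⟨s.erase v, htK, hvt, Or.inr (Or.inr (Or.inl (by rw [Finset.insert_eq]; rfl)))⟩
      · refine ⟨s.erase v, htK, hvt, Or.inr (Or.inr (Or.inr ⟨by rw [hins]; exact hs.1, ?_⟩))⟩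
        show {Sum.inr false, Sum.inr true} ∪ sEmb (s.erase v) = _
        rw [Finset.insert_union, ← Finset.insert_eq, Finset.insert_comm]
  · rintro ⟨t, htK, hvt, rfl | rfl | rfl | ⟨hins, rfl⟩⟩
    · exact sEmb_mem_susp htK hvt
    · exact insert_f_mem_susp htK hvt
    · exact insert_f_mem_susp htK hvt
    · exact class2_mem_susp hins hvt

end SuspProof
namespace SuspProof

variable {V : Type} [DecidableEq V]

/-- The transported perfect matching on the one-point suspension. -/
def suspM (v : V) (K : Finset (Finset V)) (M : Finset (Finset V × Finset V)) :
    Finset (Finset (V ⊕ Bool) × Finset (V ⊕ Bool)) :=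
  ((K.filter fun t => v ∉ t).image fun t => (sEmb t, insert (Sum.inr false) (sEmb t)))
  ∪ ((M.filter fun q => v ∉ q.2).image fun q =>
      (insert (Sum.inr true) (sEmb q.1), insert (Sum.inr true) (sEmb q.2)))
  ∪ ((M.filter fun q => v ∉ q.1 ∧ v ∈ q.2).image fun q =>
      (insert (Sum.inr true) (sEmb q.1),
        insert (Sum.inr true) (insert (Sum.inr false) (sEmb q.1))))
  ∪ ((M.filter fun q => v ∈ q.1).image fun q =>
      (insert (Sum.inr true) (insert (Sum.inr false) (sEmb (q.1.erase v))),
       insert (Sum.inr true) (insert (Sum.inr false) (sEmb (q.2.erase v)))))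

lemma mem_suspM {v : V} {K : Finset (Finset V)} {M : Finset (Finset V × Finset V)}
    {p : Finset (V ⊕ Bool) × Finset (V ⊕ Bool)} :
    p ∈ suspM v K M ↔
      (∃ t, (t ∈ K ∧ v ∉ t) ∧ p = (sEmb t, insert (Sum.inr false) (sEmb t))) ∨
      (∃ q, (q ∈ M ∧ v ∉ q.2) ∧
        p = (insert (Sum.inr true) (sEmb q.1), insert (Sum.inr true) (sEmb q.2))) ∨
      (∃ q, (q ∈ M ∧ v ∉ q.1 ∧ v ∈ q.2) ∧
        p = (insert (Sum.inr true) (sEmb q.1),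
          insert (Sum.inr true) (insert (Sum.inr false) (sEmb q.1)))) ∨
      (∃ q, (q ∈ M ∧ v ∈ q.1) ∧
        p = (insert (Sum.inr true) (insert (Sum.inr false) (sEmb (q.1.erase v))),
          insert (Sum.inr true) (insert (Sum.inr false) (sEmb (q.2.erase v))))) := by
  simp only [suspM, Finset.mem_union, Finset.mem_image, Finset.mem_filter, or_assoc]
  constructor
  · rintro (⟨t, ht, h⟩ | ⟨q, hq, h⟩ | ⟨q, hq, h⟩ | ⟨q, hq, h⟩)
    · exact Or.inl ⟨t, ht, h.symm⟩
    · exact Or.inr (Or.inl ⟨q, hq, h.symm⟩)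
    · exact Or.inr (Or.inr (Or.inl ⟨q, hq, h.symm⟩))
    · exact Or.inr (Or.inr (Or.inr ⟨q, hq, h.symm⟩))
  · rintro (⟨t, ht, h⟩ | ⟨q, hq, h⟩ | ⟨q, hq, h⟩ | ⟨q, hq, h⟩)
    · exact Or.inl ⟨t, ht, h.symm⟩
    · exact Or.inr (Or.inl ⟨q, hq, h.symm⟩)
    · exact Or.inr (Or.inr (Or.inl ⟨q, hq, h.symm⟩))
    · exact Or.inr (Or.inr (Or.inr ⟨q, hq, h.symm⟩))

/-- basic stripping facts -/
lemma ne12 : (Sum.inr false : V ⊕ Bool) ≠ Sum.inr true := by simp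

lemma f_notMem_2emb {t : Finset V} :
    (Sum.inr false : V ⊕ Bool) ∉ insert (Sum.inr true) (sEmb t) := by simp

lemma t_notMem_1emb {t : Finset V} :
    (Sum.inr true : V ⊕ Bool) ∉ insert (Sum.inr false) (sEmb t) := by simp

lemma insert_strip {α : Type*} [DecidableEq α] {x : α} {A B : Finset α}
    (hA : x ∉ A) (hB : x ∉ B) (h : insert x A = insert x B) : A = B := by
  rw [← Finset.erase_insert hA, ← Finset.erase_insert hB, h]

lemma strip2 {t s : Finset V}
    (h : insert (Sum.inr true) (sEmb t) = insert (Sum.inr true) (sEmb s)) : t = s :=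
  sEmb_inj (insert_strip inr_notMem_sEmb inr_notMem_sEmb h)

lemma strip21 {t s : Finset V}
    (h : insert (Sum.inr true) (insert (Sum.inr false) (sEmb t)) =
      insert (Sum.inr true) (insert (Sum.inr false) (sEmb s))) : t = s := by
  have := insert_strip t_notMem_1emb t_notMem_1emb h
  exact sEmb_inj (insert_strip inr_notMem_sEmb inr_notMem_sEmb this)

/-- Facts about a matched pair of `M`. -/
lemma pair_step {K : Finset (Finset V)} {M : Finset (Finset V × Finset V)}
    (hM : IsPerfectMatching K M) {q : Finset V × Finset V} (hq : q ∈ M)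
    {v : V} (h1 : v ∉ q.1) (h2 : v ∈ q.2) : q.2 = insert v q.1 := by
  obtain ⟨-, -, hsub, hcard⟩ := hM.1 q hq
  apply (Finset.eq_of_subset_of_card_le ?_ ?_).symm
  · exact Finset.insert_subset h2 hsub
  · rw [Finset.card_insert_of_notMem h1, hcard]

end SuspProof
namespace SuspProof

set_option linter.unusedSectionVars false

variable {V : Type} [DecidableEq V]

lemma mem_of_eqF {x : V ⊕ Bool} {X Y : Finset (V ⊕ Bool)} (h : X = Y) (hx : x ∈ X) :
    x ∈ Y := h ▸ hx

lemma card_2emb (t : Finset V) : (insert (Sum.inr true) (sEmb t)).card = t.card + 1 := by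
  rw [Finset.card_insert_of_notMem inr_notMem_sEmb, sEmb_card]

lemma card_1emb (t : Finset V) : (insert (Sum.inr false) (sEmb t)).card = t.card + 1 := by
  rw [Finset.card_insert_of_notMem inr_notMem_sEmb, sEmb_card]

lemma card_21emb (t : Finset V) :
    (insert (Sum.inr true) (insert (Sum.inr false) (sEmb t))).card = t.card + 2 := by
  rw [Finset.card_insert_of_notMem t_notMem_1emb, card_1emb]

lemma suspM_valid {K : Finset (Finset V)} {M : Finset (Finset V × Finset V)} {v : V}
    (hM : IsPerfectMatching K M) :
    ∀ p ∈ suspM v K M, p.1 ∈ susp v K ∧ p.2 ∈ susp v K ∧ CoversF p.1 p.2 := by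
  intro p hp
  rcases mem_suspM.1 hp with ⟨t, ⟨htK, hvt⟩, rfl⟩ | ⟨q, ⟨hqM, hv2⟩, rfl⟩ |
    ⟨q, ⟨hqM, hv1, hv2⟩, rfl⟩ | ⟨q, ⟨hqM, hv1⟩, rfl⟩
  · exact ⟨sEmb_mem_susp htK hvt, insert_f_mem_susp htK hvt,
      Finset.subset_insert _ _, card_1emb t ▸ by rw [sEmb_card]⟩
  · obtain ⟨h1K, h2K, hsub, hcard⟩ := hM.1 q hqM
    have hv1 : v ∉ q.1 := fun h => hv2 (hsub h)
    refine ⟨insert_f_mem_susp h1K hv1, insert_f_mem_susp h2K hv2, ?_, ?_⟩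
    · exact Finset.insert_subset_insert _ (sEmb_subset hsub)
    · rw [card_2emb, card_2emb, hcard]
  · obtain ⟨h1K, h2K, hsub, hcard⟩ := hM.1 q hqM
    have h22 : q.2 = insert v q.1 := pair_step hM hqM hv1 hv2
    refine ⟨insert_f_mem_susp h1K hv1, class2_mem_susp (h22 ▸ h2K) hv1, ?_, ?_⟩
    · intro x hx
      rcases Finset.mem_insert.1 hx with rfl | hx
      · exact Finset.mem_insert_self _ _
      · exact Finset.mem_insert_of_mem (Finset.mem_insert_of_mem hx)
    · rw [card_2emb, card_21emb]
  · obtain ⟨h1K, h2K, hsub, hcard⟩ := hM.1 q hqM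
    have hv2 : v ∈ q.2 := hsub hv1
    have e1 : insert v (q.1.erase v) = q.1 := Finset.insert_erase hv1
    have e2 : insert v (q.2.erase v) = q.2 := Finset.insert_erase hv2
    refine ⟨class2_mem_susp (by rw [e1]; exact h1K) (Finset.notMem_erase _ _),
      class2_mem_susp (by rw [e2]; exact h2K) (Finset.notMem_erase _ _), ?_, ?_⟩
    · exact Finset.insert_subset_insert _ (Finset.insert_subset_insert _
        (sEmb_subset (Finset.erase_subset_erase _ hsub)))
    · rw [card_21emb, card_21emb]
      have c1 : (q.1.erase v).card + 1 = q.1.card := Finset.card_erase_add_one hv1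
      have c2 : (q.2.erase v).card + 1 = q.2.card := Finset.card_erase_add_one hv2
      omega

lemma suspM_perfect {K : Finset (Finset V)} {M : Finset (Finset V × Finset V)} {v : V}
    (hK : IsComplex K) (hM : IsPerfectMatching K M) :
    IsPerfectMatching (susp v K) (suspM v K M) := by
  refine ⟨suspM_valid hM, ?_⟩
  intro u hu
  rcases (mem_susp_iff hK).1 hu with ⟨t, htK, hvt, hcase⟩
  rcases hcase with rfl | rfl | rfl | ⟨hins, rfl⟩
  · -- class 0 : u = sEmb t
    refine ⟨(sEmb t, insert (Sum.inr false) (sEmb t)),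
      ⟨mem_suspM.2 (Or.inl ⟨t, ⟨htK, hvt⟩, rfl⟩), Or.inl rfl⟩, ?_⟩
    rintro p ⟨hp, hpu⟩
    rcases mem_suspM.1 hp with ⟨t', ⟨ht'K, hvt'⟩, rfl⟩ | ⟨q, ⟨hqM, hv2⟩, rfl⟩ |
      ⟨q, ⟨hqM, hv1, hv2⟩, rfl⟩ | ⟨q, ⟨hqM, hv1⟩, rfl⟩
    · rcases hpu with h | h
      · simp only at h
        rw [sEmb_inj h]
      · exact absurd (mem_of_eqF h (Finset.mem_insert_self _ _)) (by simp)
    · rcases hpu with h | h <;>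
        exact absurd (mem_of_eqF h (Finset.mem_insert_self _ _)) (by simp)
    · rcases hpu with h | h <;>
        exact absurd (mem_of_eqF h (Finset.mem_insert_self _ _)) (by simp)
    · rcases hpu with h | h <;>
        exact absurd (mem_of_eqF h (Finset.mem_insert_self _ _)) (by simp)
  · -- class 1' : u = insert (inr false) (sEmb t)
    refine ⟨(sEmb t, insert (Sum.inr false) (sEmb t)),
      ⟨mem_suspM.2 (Or.inl ⟨t, ⟨htK, hvt⟩, rfl⟩), Or.inr rfl⟩, ?_⟩
    rintro p ⟨hp, hpu⟩
    rcases mem_suspM.1 hp with ⟨t', ⟨ht'K, hvt'⟩, rfl⟩ | ⟨q, ⟨hqM, hv2⟩, rfl⟩ |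
      ⟨q, ⟨hqM, hv1, hv2⟩, rfl⟩ | ⟨q, ⟨hqM, hv1⟩, rfl⟩
    · rcases hpu with h | h
      · exact absurd (mem_of_eqF h.symm (Finset.mem_insert_self _ _)) (by simp)
      · simp only at h
        have := sEmb_inj (insert_strip inr_notMem_sEmb inr_notMem_sEmb h)
        rw [this]
    · rcases hpu with h | h <;>
        exact absurd (mem_of_eqF (x := Sum.inr true) h (by simp)) (by simp)
    · rcases hpu with h | h
      · exact absurd (mem_of_eqF (x := Sum.inr true) h (by simp)) (by simp)
      · exact absurd (mem_of_eqF (x := Sum.inr true) h (by simp)) (by simp)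
    · rcases hpu with h | h <;>
        exact absurd (mem_of_eqF (x := Sum.inr true) h (by simp)) (by simp)
  · -- class 1'' : u = insert (inr true) (sEmb t)
    obtain ⟨q, ⟨hqM, hqt⟩, huniq⟩ := hM.2 t htK
    by_cases hv2 : v ∈ q.2
    · -- q = (t, insert v t) : type B bottom
      have hq1 : q.1 = t := by
        rcases hqt with h | h
        · exact h
        · exact absurd (h ▸ hv2) hvt
      refine ⟨(insert (Sum.inr true) (sEmb t),
          insert (Sum.inr true) (insert (Sum.inr false) (sEmb t))),
        ⟨mem_suspM.2 (Or.inr (Or.inr (Or.inl ⟨q, ⟨hqM, hq1 ▸ hvt, hv2⟩, by rw [hq1]⟩))),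
          Or.inl rfl⟩, ?_⟩
      rintro p ⟨hp, hpu⟩
      rcases mem_suspM.1 hp with ⟨t', ⟨ht'K, hvt'⟩, rfl⟩ | ⟨q', ⟨hq'M, hv2'⟩, rfl⟩ |
        ⟨q', ⟨hq'M, hv1', hv2'⟩, rfl⟩ | ⟨q', ⟨hq'M, hv1'⟩, rfl⟩
      · rcases hpu with h | h
        · exact absurd (mem_of_eqF h.symm (Finset.mem_insert_self _ _)) (by simp)
        · exact absurd (mem_of_eqF h (Finset.mem_insert_self _ _)) (by simp)
      · rcases hpu with h | h
        · have h1 : q'.1 = t := strip2 h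
          have : q' = q := huniq q' ⟨hq'M, Or.inl h1⟩
          rw [this] at hv2'
          exact absurd hv2 hv2'
        · have h2 : q'.2 = t := strip2 h
          have : q' = q := huniq q' ⟨hq'M, Or.inr h2⟩
          rw [this] at hv2'
          exact absurd hv2 hv2'
      · rcases hpu with h | h
        · have h1 : q'.1 = t := strip2 h
          have : q' = q := huniq q' ⟨hq'M, Or.inl h1⟩
          simp only [this, hq1]
        · exact absurd (mem_of_eqF (x := Sum.inr false) h (by simp)) (by simp)
      · rcases hpu with h | h <;>
          exact absurd (mem_of_eqF (x := Sum.inr false) h (by simp)) (by simp)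
    · -- type A
      refine ⟨(insert (Sum.inr true) (sEmb q.1), insert (Sum.inr true) (sEmb q.2)),
        ⟨mem_suspM.2 (Or.inr (Or.inl ⟨q, ⟨hqM, hv2⟩, rfl⟩)), ?_⟩, ?_⟩
      · rcases hqt with h | h
        · exact Or.inl (by rw [h])
        · exact Or.inr (by rw [h])
      rintro p ⟨hp, hpu⟩
      rcases mem_suspM.1 hp with ⟨t', ⟨ht'K, hvt'⟩, rfl⟩ | ⟨q', ⟨hq'M, hv2'⟩, rfl⟩ |
        ⟨q', ⟨hq'M, hv1', hv2'⟩, rfl⟩ | ⟨q', ⟨hq'M, hv1'⟩, rfl⟩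
      · rcases hpu with h | h
        · exact absurd (mem_of_eqF h.symm (Finset.mem_insert_self _ _)) (by simp)
        · exact absurd (mem_of_eqF h (Finset.mem_insert_self _ _)) (by simp)
      · rcases hpu with h | h
        · have h1 : q'.1 = t := strip2 h
          have : q' = q := huniq q' ⟨hq'M, Or.inl h1⟩
          rw [this]
        · have h2 : q'.2 = t := strip2 h
          have : q' = q := huniq q' ⟨hq'M, Or.inr h2⟩
          rw [this]
      · rcases hpu with h | h
        · have h1 : q'.1 = t := strip2 h
          have : q' = q := huniq q' ⟨hq'M, Or.inl h1⟩
          rw [this] at hv2'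
          exact absurd hv2' hv2
        · exact absurd (mem_of_eqF (x := Sum.inr false) h (by simp)) (by simp)
      · rcases hpu with h | h <;>
          exact absurd (mem_of_eqF (x := Sum.inr false) h (by simp)) (by simp)
  · -- class 2 : u = insert (inr true) (insert (inr false) (sEmb t)), insert v t ∈ K
    obtain ⟨q, ⟨hqM, hqs⟩, huniq⟩ := hM.2 (insert v t) hins
    by_cases hv1 : v ∈ q.1
    · -- type C
      refine ⟨(insert (Sum.inr true) (insert (Sum.inr false) (sEmb (q.1.erase v))),
          insert (Sum.inr true) (insert (Sum.inr false) (sEmb (q.2.erase v)))),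
        ⟨mem_suspM.2 (Or.inr (Or.inr (Or.inr ⟨q, ⟨hqM, hv1⟩, rfl⟩))), ?_⟩, ?_⟩
      · rcases hqs with h | h
        · exact Or.inl (by rw [h, Finset.erase_insert hvt])
        · exact Or.inr (by rw [h, Finset.erase_insert hvt])
      rintro p ⟨hp, hpu⟩
      rcases mem_suspM.1 hp with ⟨t', ⟨ht'K, hvt'⟩, rfl⟩ | ⟨q', ⟨hq'M, hv2'⟩, rfl⟩ |
        ⟨q', ⟨hq'M, hv1', hv2'⟩, rfl⟩ | ⟨q', ⟨hq'M, hv1'⟩, rfl⟩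
      · rcases hpu with h | h
        · exact absurd (mem_of_eqF h.symm (Finset.mem_insert_self _ _)) (by simp)
        · exact absurd (mem_of_eqF h.symm (Finset.mem_insert_self _ _)) (by simp)
      · rcases hpu with h | h <;>
          exact absurd (mem_of_eqF (x := Sum.inr false) h.symm (by simp)) (by simp)
      · rcases hpu with h | h
        · exact absurd (mem_of_eqF (x := Sum.inr false) h.symm (by simp)) (by simp)
        · have h1 : q'.1 = t := strip21 h
          have hq'2 : q'.2 = insert v t := by
            rw [← h1]; exact pair_step hM hq'M (h1 ▸ hvt) hv2'
          have : q' = q := huniq q' ⟨hq'M, Or.inr hq'2⟩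
          rw [this] at hv1'
          exact absurd hv1 hv1'
      · rcases hpu with h | h
        · have h1 : q'.1.erase v = t := strip21 h
          have : q'.1 = insert v t := by rw [← h1, Finset.insert_erase hv1']
          have heq : q' = q := huniq q' ⟨hq'M, Or.inl this⟩
          rw [heq]
        · have h2 : q'.2.erase v = t := strip21 h
          have hv2' : v ∈ q'.2 := (hM.1 q' hq'M).2.2.1 hv1'
          have : q'.2 = insert v t := by rw [← h2, Finset.insert_erase hv2']
          have heq : q' = q := huniq q' ⟨hq'M, Or.inr this⟩
          rw [heq]
    · -- type B top : q = (t, insert v t)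
      have hq2 : q.2 = insert v t := by
        rcases hqs with h | h
        · exact absurd (h ▸ Finset.mem_insert_self v t : v ∈ q.1) hv1
        · exact h
      have hv2 : v ∈ q.2 := hq2 ▸ Finset.mem_insert_self v t
      have hq1 : q.1 = t := by
        have := pair_step hM hqM hv1 hv2
        rw [hq2] at this
        exact (insert_strip hvt hv1 this).symm
      refine ⟨(insert (Sum.inr true) (sEmb t),
          insert (Sum.inr true) (insert (Sum.inr false) (sEmb t))),
        ⟨mem_suspM.2 (Or.inr (Or.inr (Or.inl ⟨q, ⟨hqM, hq1 ▸ hvt, hv2⟩, by rw [hq1]⟩))),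
          Or.inr rfl⟩, ?_⟩
      rintro p ⟨hp, hpu⟩
      rcases mem_suspM.1 hp with ⟨t', ⟨ht'K, hvt'⟩, rfl⟩ | ⟨q', ⟨hq'M, hv2'⟩, rfl⟩ |
        ⟨q', ⟨hq'M, hv1', hv2'⟩, rfl⟩ | ⟨q', ⟨hq'M, hv1'⟩, rfl⟩
      · rcases hpu with h | h
        · exact absurd (mem_of_eqF h.symm (Finset.mem_insert_self _ _)) (by simp)
        · exact absurd (mem_of_eqF h.symm (Finset.mem_insert_self _ _)) (by simp)
      · rcases hpu with h | h <;>
          exact absurd (mem_of_eqF (x := Sum.inr false) h.symm (by simp)) (by simp)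
      · rcases hpu with h | h
        · exact absurd (mem_of_eqF (x := Sum.inr false) h.symm (by simp)) (by simp)
        · have h1 : q'.1 = t := strip21 h
          have hq'2 : q'.2 = insert v t := by
            rw [← h1]; exact pair_step hM hq'M (h1 ▸ hvt) hv2'
          have : q' = q := huniq q' ⟨hq'M, Or.inr hq'2⟩
          simp only [this, hq1]
      · rcases hpu with h | h
        · have h1 : q'.1.erase v = t := strip21 h
          have : q'.1 = insert v t := by rw [← h1, Finset.insert_erase hv1']
          have heq : q' = q := huniq q' ⟨hq'M, Or.inl this⟩
          rw [heq] at hv1'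
          exact absurd hv1' hv1
        · have h2 : q'.2.erase v = t := strip21 h
          have hv2'' : v ∈ q'.2 := (hM.1 q' hq'M).2.2.1 hv1'
          have : q'.2 = insert v t := by rw [← h2, Finset.insert_erase hv2'']
          have heq : q' = q := huniq q' ⟨hq'M, Or.inr this⟩
          rw [heq] at hv1'
          exact absurd hv1' hv1

end SuspProof
namespace SuspProof

set_option linter.unusedSectionVars false
set_option maxHeartbeats 1000000

variable {V : Type} [DecidableEq V]

open scoped Classical in
/-- A "height" function strictly increasing along the modified Hasse diagram of `K`. -/
noncomputable def fK (K : Finset (Finset V)) (M : Finset (Finset V × Finset V))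
    (s : Finset V) : ℕ :=
  (K.filter fun u => Relation.TransGen (MorseRel K M) u s).card

lemma fK_lt {K : Finset (Finset V)} {M : Finset (Finset V × Finset V)}
    (hac : ∀ s, ¬ Relation.TransGen (MorseRel K M) s s)
    {s t : Finset V} (h : MorseRel K M s t) : fK K M s < fK K M t := by
  classical
  unfold fK
  apply Finset.card_lt_card
  have hsub : (K.filter fun u => Relation.TransGen (MorseRel K M) u s) ⊆
      (K.filter fun u => Relation.TransGen (MorseRel K M) u t) := by
    intro u hu
    rw [Finset.mem_filter] at hu ⊢
    exact ⟨hu.1, hu.2.tail h⟩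
  rw [Finset.ssubset_iff_of_subset hsub]
  refine ⟨s, Finset.mem_filter.2 ⟨h.1, Relation.TransGen.single h⟩, fun hs => ?_⟩
  exact hac s (Finset.mem_filter.1 hs).2

/-- The global potential function on faces of the suspension. -/
noncomputable def FS (K : Finset (Finset V)) (M : Finset (Finset V × Finset V))
    (v : V) (u : Finset (V ⊕ Bool)) : ℕ :=
  if Sum.inr true ∈ u then
    2 * (vertsOf K).card + 2 +
      fK K M (if Sum.inr false ∈ u then insert v (sCore u) else sCore u)
  else 2 * (sCore u).card + (if Sum.inr false ∈ u then 0 else 1)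

lemma FS_emb {K M} {v : V} (t : Finset V) : FS K M v (sEmb t) = 2 * t.card + 1 := by
  simp [FS]

lemma FS_1 {K M} {v : V} (t : Finset V) :
    FS K M v (insert (Sum.inr false) (sEmb t)) = 2 * t.card := by
  simp [FS]

lemma FS_2 {K M} {v : V} (t : Finset V) :
    FS K M v (insert (Sum.inr true) (sEmb t)) =
      2 * (vertsOf K).card + 2 + fK K M t := by
  simp [FS]

lemma FS_21 {K M} {v : V} (t : Finset V) :
    FS K M v (insert (Sum.inr true) (insert (Sum.inr false) (sEmb t))) =
      2 * (vertsOf K).card + 2 + fK K M (insert v t) := by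
  simp [FS, Finset.insert_comm]

lemma card_le_verts {K : Finset (Finset V)} {t : Finset V} (ht : t ∈ K) :
    t.card ≤ (vertsOf K).card :=
  Finset.card_le_card (Finset.le_sup (f := id) ht)

lemma sCore_mono {A B : Finset (V ⊕ Bool)} (h : A ⊆ B) : sCore A ⊆ sCore B :=
  fun a ha => mem_sCore.2 (h (mem_sCore.1 ha))

lemma FS_lt {K : Finset (Finset V)} {M : Finset (Finset V × Finset V)} {v : V}
    (hK : IsComplex K) (hM : IsPerfectMatching K M)
    (hac : ∀ s, ¬ Relation.TransGen (MorseRel K M) s s)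
    {u w : Finset (V ⊕ Bool)} (h : MorseRel (susp v K) (suspM v K M) u w) :
    FS K M v u < FS K M v w := by
  obtain ⟨hu, hw, hcase⟩ := h
  rcases hcase with ⟨hcov, hnm⟩ | ⟨hcov, hm⟩
  · -- upward unmatched edge
    rcases (mem_susp_iff hK).1 hu with ⟨tu, htuK, hvtu, hcu⟩
    rcases (mem_susp_iff hK).1 hw with ⟨tw, htwK, hvtw, hcw⟩
    have hcore : sCore u ⊆ sCore w := sCore_mono hcov.1
    have hcard := hcov.2
    rcases hcu with rfl | rfl | rfl | ⟨hinsu, rfl⟩ <;>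
      rcases hcw with rfl | rfl | rfl | ⟨hinsw, rfl⟩
    · -- (0,0)
      rw [FS_emb, FS_emb]
      rw [sEmb_card, sEmb_card] at hcard
      omega
    · -- (0,1') : must be matched
      exfalso
      simp only [sCore_sEmb, sCore_insert_inr] at hcore
      rw [card_1emb, sEmb_card] at hcard
      have : tu = tw := Finset.eq_of_subset_of_card_le hcore (by omega)
      subst this
      exact hnm (mem_suspM.2 (Or.inl ⟨tu, ⟨htuK, hvtu⟩, rfl⟩))
    · -- (0,1'')
      rw [FS_emb, FS_2]
      have := card_le_verts htuK
      omega
    · -- (0,2)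
      rw [FS_emb, FS_21]
      have := card_le_verts htuK
      omega
    · -- (1',0)
      exact absurd (hcov.1 (Finset.mem_insert_self _ _)) (by simp)
    · -- (1',1')
      rw [FS_1, FS_1]
      rw [card_1emb, card_1emb] at hcard
      omega
    · -- (1',1'')
      exact absurd (hcov.1 (Finset.mem_insert_self _ _)) (by simp)
    · -- (1',2)
      rw [FS_1, FS_21]
      have := card_le_verts htuK
      omega
    · -- (1'',0)
      exact absurd (hcov.1 (Finset.mem_insert_self _ _)) (by simp)
    · -- (1'',1')
      exact absurd (hcov.1 (Finset.mem_insert_self _ _)) (by simp)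
    · -- (1'',1'')
      simp only [sCore_sEmb, sCore_insert_inr] at hcore
      rw [card_2emb, card_2emb] at hcard
      have hnotM : (tu, tw) ∉ M := by
        intro hmem
        exact hnm (mem_suspM.2 (Or.inr (Or.inl ⟨(tu, tw), ⟨hmem, hvtw⟩, rfl⟩)))
      have : MorseRel K M tu tw := ⟨htuK, htwK, Or.inl ⟨⟨hcore, by omega⟩, hnotM⟩⟩
      rw [FS_2, FS_2]
      have := fK_lt hac this
      omega
    · -- (1'',2)
      simp only [sCore_sEmb, sCore_insert_inr] at hcore
      rw [card_21emb, card_2emb] at hcard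
      have heq : tu = tw := Finset.eq_of_subset_of_card_le hcore (by omega)
      subst heq
      have hnotM : (tu, insert v tu) ∉ M := by
        intro hmem
        exact hnm (mem_suspM.2 (Or.inr (Or.inr (Or.inl
          ⟨(tu, insert v tu), ⟨hmem, hvtu, Finset.mem_insert_self _ _⟩, rfl⟩))))
      have : MorseRel K M tu (insert v tu) := ⟨htuK, hinsw, Or.inl
        ⟨⟨Finset.subset_insert _ _, Finset.card_insert_of_notMem hvtu⟩, hnotM⟩⟩
      rw [FS_2, FS_21]
      have := fK_lt hac this
      omega
    · -- (2,0)
      exact absurd (hcov.1 (Finset.mem_insert_self _ _)) (by simp)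
    · -- (2,1')
      exact absurd (hcov.1 (Finset.mem_insert_self _ _)) (by simp)
    · -- (2,1'')
      exact absurd (hcov.1 (Finset.mem_insert_of_mem (Finset.mem_insert_self _ _))) (by simp)
    · -- (2,2)
      simp only [sCore_sEmb, sCore_insert_inr] at hcore
      rw [card_21emb, card_21emb] at hcard
      have hnotM : (insert v tu, insert v tw) ∉ M := by
        intro hmem
        apply hnm
        apply mem_suspM.2
        refine Or.inr (Or.inr (Or.inr ⟨(insert v tu, insert v tw),
          ⟨hmem, Finset.mem_insert_self _ _⟩, ?_⟩))
        simp only [Finset.erase_insert hvtu, Finset.erase_insert hvtw]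
      have hmr : MorseRel K M (insert v tu) (insert v tw) := by
        refine ⟨hinsu, hinsw, Or.inl ⟨⟨?_, ?_⟩, hnotM⟩⟩
        · intro x hx
          rcases Finset.mem_insert.1 hx with rfl | hx
          · exact Finset.mem_insert_self _ _
          · exact Finset.mem_insert_of_mem (hcore hx)
        · rw [Finset.card_insert_of_notMem hvtu, Finset.card_insert_of_notMem hvtw]
          omega
      rw [FS_21, FS_21]
      have := fK_lt hac hmr
      omega
  · -- downward matched edge
    rcases (mem_susp_iff hK).1 hu with ⟨tu, htuK, hvtu, hcu⟩
    rcases mem_suspM.1 hm with ⟨t', ⟨ht'K, hvt'⟩, hp⟩ | ⟨q, ⟨hqM, hv2⟩, hp⟩ |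
      ⟨q, ⟨hqM, hv1, hv2⟩, hp⟩ | ⟨q, ⟨hqM, hv1⟩, hp⟩ <;>
      rw [Prod.mk.injEq] at hp <;> obtain ⟨h1, h2⟩ := hp <;>
      rcases hcu with rfl | rfl | rfl | ⟨hinsu, rfl⟩
    -- cone pair
    · exact absurd (mem_of_eqF h2.symm (Finset.mem_insert_self _ _)) (by simp)
    · -- u = p.2 of cone pair : w = sEmb tu
      have : t' = tu := sEmb_inj (insert_strip inr_notMem_sEmb inr_notMem_sEmb h2.symm)
      subst this
      rw [h1, FS_emb, FS_1]
      omega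
    · exact absurd (mem_of_eqF (x := Sum.inr true) h2 (by simp)) (by simp)
    · exact absurd (mem_of_eqF (x := Sum.inr true) h2 (by simp)) (by simp)
    -- type A pair
    · exact absurd (mem_of_eqF h2.symm (Finset.mem_insert_self _ _)) (by simp)
    · exact absurd (mem_of_eqF h2.symm (Finset.mem_insert_self _ _)) (by simp)
    · -- u = insert 2 (sEmb q.2), w = insert 2 (sEmb q.1)
      have hq2 : q.2 = tu := sEmb_inj (insert_strip inr_notMem_sEmb inr_notMem_sEmb h2.symm)
      have hmr : MorseRel K M tu q.1 := by
        obtain ⟨h1K, h2K, hcv⟩ := hM.1 q hqM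
        refine ⟨by rw [← hq2]; exact h2K, h1K, Or.inr ⟨by rw [← hq2]; exact hcv, ?_⟩⟩
        rw [← hq2, Prod.mk.eta]
        exact hqM
      rw [h1, FS_2, FS_2]
      have := fK_lt hac hmr
      omega
    · exact absurd (mem_of_eqF (x := Sum.inr false) h2 (by simp)) (by simp)
    -- type B pair
    · exact absurd (mem_of_eqF h2.symm (Finset.mem_insert_self _ _)) (by simp)
    · exact absurd (mem_of_eqF h2.symm (Finset.mem_insert_self _ _)) (by simp)
    · exact absurd (mem_of_eqF (x := Sum.inr false) h2.symm (by simp)) (by simp)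
    · -- u = insert 2 (insert 1 (sEmb q.1)), w = insert 2 (sEmb q.1)
      have hq1 : q.1 = tu := strip21 h2.symm
      have hq2 : q.2 = insert v tu := by rw [pair_step hM hqM hv1 hv2, hq1]
      have hmr : MorseRel K M (insert v tu) tu := by
        obtain ⟨h1K, h2K, hcv⟩ := hM.1 q hqM
        refine ⟨by rw [← hq2]; exact h2K, by rw [← hq1]; exact h1K, Or.inr ⟨?_, ?_⟩⟩
        · rw [← hq2, ← hq1]; exact hcv
        · rw [← hq2, ← hq1, Prod.mk.eta]; exact hqM
      rw [h1, hq1, FS_2, FS_21]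
      have := fK_lt hac hmr
      omega
    -- type C pair
    · exact absurd (mem_of_eqF h2.symm (Finset.mem_insert_self _ _)) (by simp)
    · exact absurd (mem_of_eqF h2.symm (Finset.mem_insert_self _ _)) (by simp)
    · exact absurd (mem_of_eqF (x := Sum.inr false) h2.symm (by simp)) (by simp)
    · -- u = insert 2 (insert 1 (sEmb (q.2.erase v))), w likewise with q.1
      have hv2 : v ∈ q.2 := (hM.1 q hqM).2.2.1 hv1
      have hq2 : q.2.erase v = tu := strip21 h2.symm
      have hq2' : q.2 = insert v tu := by rw [← hq2, Finset.insert_erase hv2]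
      have hmr : MorseRel K M q.2 q.1 := by
        obtain ⟨h1K, h2K, hcv⟩ := hM.1 q hqM
        exact ⟨h2K, h1K, Or.inr ⟨hcv, Prod.mk.eta ▸ hqM⟩⟩
      rw [h1, FS_21, FS_21, Finset.insert_erase hv1]
      rw [hq2'] at hmr
      have := fK_lt hac hmr
      omega

end SuspProof

/-- If a simplicial complex `K` admits a perfect acyclic (Morse)
matching on its Hasse diagram (i.e. `K` is collapsible), then the one-point suspension
`Susp₁(v,K)` is collapsible. -/
theorem susp_collapsible (K : Finset (Finset V)) (v : V)
    (hK : IsComplex K) (hv : {v} ∈ K) (hc : Collapsible K) :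
    Collapsible (susp v K) := by
  obtain ⟨M, hM, hac⟩ := hc
  refine ⟨SuspProof.suspM v K M, SuspProof.suspM_perfect hK hM, fun s hs => ?_⟩
  have key : ∀ a b, Relation.TransGen (MorseRel (susp v K) (SuspProof.suspM v K M)) a b →
      SuspProof.FS K M v a < SuspProof.FS K M v b := by
    intro a b h
    induction h with
    | single h => exact SuspProof.FS_lt hK hM hac h
    | tail _ h ih => exact ih.trans (SuspProof.FS_lt hK hM hac h)
  exact absurd (key s s hs) (lt_irrefl _)
end
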